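/- arXiv:2109.00647 — 4 statements merged into one kernel-verified Lean document; each statement's English description precedes it below -/
import Mathlib

section
/- Let X be the Knaster–Kuratowski fan and let z = (1/2, 1/2) be its dispersion point. Then X \ {z} is totally disconnected. -/
open Set

/-- The apex of the Knaster–Kuratowski fan. -/
noncomputable def kkApex : ℝ × ℝ := (1/2, 1/2)

/-- The Cantor set, viewed inside `[0,1] × {0} ⊆ ℝ²` via first coordinates. -/
noncomputable def kkCantor : Set ℝ := cantorSet

/-- `C₁`: the endpoints of the open intervals removed in the construction of the
Cantor set, i.e. points `x` of the Cantor set which are an endpoint of a maximal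
open interval disjoint from the Cantor set with both endpoints in the Cantor set. -/
def kkEndpoints : Set ℝ :=
  {x | x ∈ cantorSet ∧ ∃ a ∈ cantorSet, ∃ b ∈ cantorSet,
    a < b ∧ Ioo a b ∩ cantorSet = ∅ ∧ (x = a ∨ x = b)}

/-- The Knaster–Kuratowski fan: over endpoints `x ∈ C₁` take the points of the
segment from `(x,0)` to the apex with rational second coordinate, over the other
Cantor points take the points with irrational second coordinate. -/
noncomputable def kkFan : Set (ℝ × ℝ) :=
  ⋃ x ∈ cantorSet, {p ∈ segment ℝ (x, (0:ℝ)) kkApex |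
    (x ∈ kkEndpoints ∧ ∃ q : ℚ, p.2 = (q : ℝ)) ∨ (x ∉ kkEndpoints ∧ Irrational p.2)}

lemma preCantorSet_subset_unit : ∀ n, preCantorSet n ⊆ Icc (0:ℝ) 1 := by
  intro n
  induction n with
  | zero => simp
  | succ n ih =>
    rintro x (⟨s, hs, rfl⟩ | ⟨s, hs, rfl⟩) <;>
      obtain ⟨h0, h1⟩ := ih hs <;> constructor <;> simp <;> linarith

lemma preCantorSet_interval_bound : ∀ n, ∀ x y : ℝ, x < y →
    Icc x y ⊆ preCantorSet n → y - x ≤ (1/3 : ℝ) ^ n := by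
  intro n
  induction n with
  | zero =>
    intro x y hxy h
    have hx := (h (left_mem_Icc.2 hxy.le))
    have hy := (h (right_mem_Icc.2 hxy.le))
    simp only [preCantorSet_zero, mem_Icc] at hx hy
    simp only [pow_zero]
    linarith
  | succ n ih =>
    intro x y hxy h
    have hA : ∀ t : ℝ, t ∈ (· / 3) '' preCantorSet n → t ≤ 1/3 := by
      rintro t ⟨s, hs, rfl⟩
      have := (preCantorSet_subset_unit n hs).2
      linarith
    have hB : ∀ t : ℝ, t ∈ (fun x ↦ (2 + x) / 3) '' preCantorSet n → 2/3 ≤ t := by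
      rintro t ⟨s, hs, rfl⟩
      have := (preCantorSet_subset_unit n hs).1
      simp only []
      linarith
    -- the interval cannot meet both halves
    have hsplit : (Icc x y ⊆ (· / 3) '' preCantorSet n) ∨
        (Icc x y ⊆ (fun x ↦ (2 + x) / 3) '' preCantorSet n) := by
      by_contra hcon
      obtain ⟨hc1, hc2⟩ := not_or.mp hcon
      obtain ⟨u, hu, huA⟩ := not_subset.mp hc1
      obtain ⟨v, hv, hvB⟩ := not_subset.mp hc2
      have hu' := h hu
      have hv' := h hv
      rw [preCantorSet_succ] at hu' hv'
      have huB : u ∈ (fun x ↦ (2 + x) / 3) '' preCantorSet n := hu'.resolve_left huA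
      have hvA : v ∈ (· / 3) '' preCantorSet n := hv'.resolve_right hvB
      have h1 : 2/3 ≤ u := hB u huB
      have h2 : v ≤ 1/3 := hA v hvA
      have hhalf : (1/2 : ℝ) ∈ Icc x y := by
        constructor
        · have := hv.1; linarith
        · have := hu.2; linarith
      have := h hhalf
      rw [preCantorSet_succ] at this
      rcases this with hh | hh
      · have := hA _ hh; linarith
      · have := hB _ hh; linarith
    rcases hsplit with hs | hs
    · have : Icc (3*x) (3*y) ⊆ preCantorSet n := by
        intro u hu
        have : u / 3 ∈ Icc x y := by
          constructor
          · have := hu.1; linarith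
          · have := hu.2; linarith
        obtain ⟨s, hsmem, hse⟩ := hs this
        have : s = u := by field_simp at hse; linarith
        rwa [← this]
      have := ih (3*x) (3*y) (by linarith) this
      rw [pow_succ]
      nlinarith [pow_pos (by norm_num : (0:ℝ) < 1/3) n]
    · have : Icc (3*x - 2) (3*y - 2) ⊆ preCantorSet n := by
        intro u hu
        have : (2 + u) / 3 ∈ Icc x y := by
          constructor
          · have := hu.1; linarith
          · have := hu.2; linarith
        obtain ⟨s, hsmem, hse⟩ := hs this
        have : s = u := by field_simp at hse; linarith
        rwa [← this]
      have := ih (3*x - 2) (3*y - 2) (by linarith) this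
      rw [pow_succ]
      nlinarith [pow_pos (by norm_num : (0:ℝ) < 1/3) n]

lemma cantorSet_gap {a b : ℝ} (hab : a < b) : ∃ c, a < c ∧ c < b ∧ c ∉ cantorSet := by
  by_contra hcon
  push_neg at hcon
  have hsub : Icc ((2*a + b)/3) ((a + 2*b)/3) ⊆ cantorSet := by
    intro u hu
    exact hcon u (by have := hu.1; linarith) (by have := hu.2; linarith)
  obtain ⟨n, hn⟩ := exists_pow_lt_of_lt_one (show (0:ℝ) < (b - a)/3 by linarith)
    (show (1/3 : ℝ) < 1 by norm_num)
  have hsub' : Icc ((2*a + b)/3) ((a + 2*b)/3) ⊆ preCantorSet n := fun u hu =>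
    mem_iInter.mp (hsub hu) n
  have := preCantorSet_interval_bound n _ _ (show (2*a+b)/3 < (a+2*b)/3 by linarith) hsub'
  linarith

lemma subsingleton_of_gaps {s : Set ℝ} (hs : IsPreconnected s)
    (h : ∀ a b : ℝ, a ∈ s → b ∈ s → a < b → ∃ c, a < c ∧ c < b ∧ c ∉ s) :
    s.Subsingleton := by
  intro a ha b hb
  by_contra hne
  have hord := hs.ordConnected
  rcases lt_or_gt_of_ne hne with hlt | hlt
  · obtain ⟨c, h1, h2, h3⟩ := h a b ha hb hlt
    exact h3 (hord.out ha hb ⟨h1.le, h2.le⟩)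
  · obtain ⟨c, h1, h2, h3⟩ := h b a hb ha hlt
    exact h3 (hord.out hb ha ⟨h1.le, h2.le⟩)

/-- base point on the Cantor set of a fan point -/
noncomputable def kkBase (p : ℝ × ℝ) : ℝ := (p.1 - p.2) / (1 - 2 * p.2)

lemma kkFan_struct {p : ℝ × ℝ} (hp : p ∈ kkFan) (hne : p ≠ kkApex) :
    ∃ x ∈ cantorSet, 0 ≤ p.2 ∧ p.2 < 1/2 ∧ p.1 = x * (1 - 2 * p.2) + p.2 ∧
      ((x ∈ kkEndpoints ∧ ∃ q : ℚ, p.2 = (q : ℝ)) ∨ (x ∉ kkEndpoints ∧ Irrational p.2)) := by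
  simp only [kkFan, mem_iUnion, mem_setOf_eq, exists_prop] at hp
  obtain ⟨x, hx, ⟨hseg, hcond⟩⟩ := hp
  obtain ⟨a, b, ha, hb, hab, habp⟩ := hseg
  have hp1 : p.1 = a * x + b * (1/2) := by
    rw [← habp]; simp [kkApex, Prod.smul_def, Prod.add_def]
  have hp2 : p.2 = b * (1/2) := by
    rw [← habp]; simp [kkApex, Prod.smul_def, Prod.add_def]
  have hblt : b < 1 := by
    rcases lt_or_eq_of_le (show b ≤ 1 by linarith) with h | h
    · exact h
    · exfalso; apply hne
      have ha0 : a = 0 := by linarith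
      have : p = (1/2, 1/2) := by
        apply Prod.ext <;> simp [hp1, hp2, ha0, h]
      simpa [kkApex] using this
  refine ⟨x, hx, by linarith, by linarith, ?_, hcond⟩
  have : a = 1 - b := by linarith
  rw [hp1, hp2, this]; ring

lemma kkBase_eq {p : ℝ × ℝ} {x : ℝ} (h2 : p.2 < 1/2) (h : p.1 = x * (1 - 2 * p.2) + p.2) :
    kkBase p = x := by
  have hne : 1 - 2 * p.2 ≠ 0 := by intro hc; rw [sub_eq_zero] at hc; linarith
  rw [kkBase, h]
  field_simp
  ring

/-- The Knaster–Kuratowski fan with its dispersion point `z = (1/2, 1/2)` removed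
is totally disconnected. -/
theorem stmt_5 : IsTotallyDisconnected (kkFan \ {kkApex}) := by
  intro t hts hpre p hp q hq
  -- structure of points in t
  have hstruct : ∀ w ∈ t, ∃ x ∈ cantorSet, 0 ≤ w.2 ∧ w.2 < 1/2 ∧
      w.1 = x * (1 - 2 * w.2) + w.2 ∧
      ((x ∈ kkEndpoints ∧ ∃ q : ℚ, w.2 = (q : ℝ)) ∨ (x ∉ kkEndpoints ∧ Irrational w.2)) := by
    intro w hw
    obtain ⟨hwf, hwne⟩ := hts hw
    exact kkFan_struct hwf hwne
  -- kkBase is continuous on t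
  have hcont : ContinuousOn kkBase t := by
    apply ContinuousOn.div
    · exact (continuous_fst.sub continuous_snd).continuousOn
    · exact (continuous_const.sub (continuous_const.mul continuous_snd)).continuousOn
    · intro w hw
      obtain ⟨x, _, _, h2, _, _⟩ := hstruct w hw
      intro hc; rw [sub_eq_zero] at hc; linarith
  -- kkBase '' t is a preconnected subset of the Cantor set
  have himg : IsPreconnected (kkBase '' t) := hpre.image _ hcont
  have hsub : kkBase '' t ⊆ cantorSet := by
    rintro _ ⟨w, hw, rfl⟩
    obtain ⟨x, hx, _, h2, heq, _⟩ := hstruct w hw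
    rw [kkBase_eq h2 heq]; exact hx
  have hsing : (kkBase '' t).Subsingleton := by
    apply subsingleton_of_gaps himg
    intro a b _ _ hab
    obtain ⟨c, h1, h2, h3⟩ := cantorSet_gap hab
    exact ⟨c, h1, h2, fun hc => h3 (hsub hc)⟩
  -- so all points of t lie on one segment, with base x
  obtain ⟨x, hx, _, hp2, hpeq, _⟩ := hstruct p hp
  have hxbase : kkBase p = x := kkBase_eq hp2 hpeq
  have hbaseconst : ∀ w ∈ t, kkBase w = x := fun w hw =>
    (hsing (mem_image_of_mem _ hw) (mem_image_of_mem _ hp)).trans hxbase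
  have hcond : ∀ w ∈ t,
      ((x ∈ kkEndpoints ∧ ∃ q : ℚ, w.2 = (q : ℝ)) ∨ (x ∉ kkEndpoints ∧ Irrational w.2)) := by
    intro w hw
    obtain ⟨x', hx', _, h2, heq, hc⟩ := hstruct w hw
    have : x' = x := by rw [← kkBase_eq h2 heq, hbaseconst w hw]
    rwa [this] at hc
  -- the second coordinates of t form a preconnected set of only rationals or only irrationals
  have himg2 : IsPreconnected (Prod.snd '' t) := hpre.image _ continuous_snd.continuousOn
  have hsing2 : (Prod.snd '' t).Subsingleton := by
    apply subsingleton_of_gaps himg2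
    intro a b ha hb hab
    by_cases hxe : x ∈ kkEndpoints
    · obtain ⟨c, hc, h1, h2⟩ := exists_irrational_btwn hab
      refine ⟨c, h1, h2, ?_⟩
      rintro ⟨w, hw, rfl⟩
      rcases hcond w hw with ⟨_, q, hq⟩ | ⟨hne, _⟩
      · exact hc ⟨q, hq.symm⟩
      · exact hne hxe
    · obtain ⟨c, h1, h2⟩ := exists_rat_btwn hab
      refine ⟨(c:ℝ), h1, h2, ?_⟩
      rintro ⟨w, hw, heq⟩
      rcases hcond w hw with ⟨hxe', _⟩ | ⟨_, hirr⟩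
      · exact hxe hxe'
      · exact hirr ⟨c, heq.symm⟩
  -- conclude
  have h2eq : p.2 = q.2 := hsing2 (mem_image_of_mem _ hp) (mem_image_of_mem _ hq)
  obtain ⟨x', hx', _, hq2, hqeq, _⟩ := hstruct q hq
  have : x' = x := by rw [← kkBase_eq hq2 hqeq, hbaseconst q hq]
  rw [this] at hqeq
  apply Prod.ext
  · rw [hpeq, hqeq, h2eq]
  · exact h2eq
end

section
/- The Knaster–Kuratowski fan X is not locally connected. -/
open Set

/-!
Below the apex, `p ↦ (p.1 - p.2) / (1 - 2 p.2)` continuously sends each point of the fan to the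
foot of its leg, a point of the totally disconnected Cantor set. So a connected neighbourhood of
`(1/3, 0)` under height `1/2` stays on the leg over the endpoint `1/3`, where all heights are
rational; its heights form an interval containing `0`, hence it lies in the base line. But every
neighbourhood of `(1/3, 0)` in the fan contains points of that leg at small positive height.
-/

open Filter Topology

lemma one_mem_preCantorSet (n : ℕ) : (1 : ℝ) ∈ preCantorSet n := by
  induction n with
  | zero => simp
  | succ n ih => exact Or.inr ⟨1, ih, by norm_num⟩

lemma one_third_mem_cantorSet : (1 / 3 : ℝ) ∈ cantorSet := by
  refine mem_iInter.mpr fun n => ?_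
  cases n with
  | zero => norm_num
  | succ n => exact Or.inl ⟨1, one_mem_preCantorSet n, by norm_num⟩

lemma two_thirds_mem_cantorSet : (2 / 3 : ℝ) ∈ cantorSet := by
  refine mem_iInter.mpr fun n => ?_
  cases n with
  | zero => norm_num
  | succ n => exact Or.inr ⟨0, zero_mem_preCantorSet n, by norm_num⟩

lemma Ioo_one_third_two_thirds_inter_cantorSet : Ioo (1 / 3 : ℝ) (2 / 3) ∩ cantorSet = ∅ := by
  refine eq_empty_of_forall_notMem fun y ⟨⟨h1, h2⟩, hy⟩ => ?_
  rcases mem_iInter.mp hy 1 with ⟨z, hz, rfl⟩ | ⟨z, hz, rfl⟩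
  · linarith [hz.2]
  · linarith [hz.1]

lemma one_third_mem_kkEndpoints : (1 / 3 : ℝ) ∈ kkEndpoints :=
  ⟨one_third_mem_cantorSet, 1 / 3, one_third_mem_cantorSet, 2 / 3, two_thirds_mem_cantorSet,
    by norm_num, Ioo_one_third_two_thirds_inter_cantorSet, Or.inl rfl⟩

lemma isTotallyDisconnected_cantorSet : IsTotallyDisconnected cantorSet :=
  totallyDisconnectedSpace_subtype_iff.mp cantorSetHomeomorphNatToBool.symm.totallyDisconnectedSpace

def kkLegPoint (x s : ℝ) : ℝ × ℝ := ((1 - 2 * s) * x + s, s)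

@[simp]
lemma kkLegPoint_snd (x s : ℝ) : (kkLegPoint x s).2 = s := rfl

noncomputable def kkLegFoot (p : ℝ × ℝ) : ℝ := (p.1 - p.2) / (1 - 2 * p.2)

lemma kkLegFoot_kkLegPoint {x s : ℝ} (hs : s ≠ 1 / 2) : kkLegFoot (kkLegPoint x s) = x := by
  have : 1 - 2 * s ≠ 0 := fun h => hs (by linarith)
  simp only [kkLegFoot, kkLegPoint]
  field_simp
  ring

lemma continuous_kkLegPoint (x : ℝ) : Continuous (kkLegPoint x) := by
  unfold kkLegPoint; fun_prop

lemma continuousOn_kkLegFoot : ContinuousOn kkLegFoot {p | p.2 < 1 / 2} := by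
  refine ContinuousOn.div (by fun_prop) (by fun_prop) fun p hp => ?_
  linarith [show p.2 < 1 / 2 from hp]

lemma segment_eq_image_kkLegPoint (x : ℝ) :
    segment ℝ (x, (0 : ℝ)) kkApex = kkLegPoint x '' Icc 0 (1 / 2) := by
  have hline : ∀ t : ℝ, (1 - t) • (x, (0 : ℝ)) + t • kkApex = kkLegPoint x (t / 2) := by
    intro t
    simp only [kkApex, kkLegPoint, Prod.smul_mk, smul_eq_mul, Prod.mk_add_mk, Prod.mk.injEq]
    constructor <;> ring
  rw [segment_eq_image]
  ext p
  constructor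
  · rintro ⟨t, ⟨ht0, ht1⟩, rfl⟩
    exact ⟨t / 2, ⟨by linarith, by linarith⟩, (hline t).symm⟩
  · rintro ⟨s, ⟨hs0, hs1⟩, rfl⟩
    refine ⟨2 * s, ⟨by linarith, by linarith⟩, ?_⟩
    simp only [hline, mul_div_cancel_left₀ s two_ne_zero]

lemma mem_kkFan_iff {p : ℝ × ℝ} :
    p ∈ kkFan ↔ ∃ x ∈ cantorSet, ∃ s ∈ Icc (0 : ℝ) (1 / 2), kkLegPoint x s = p ∧
      ((x ∈ kkEndpoints ∧ ∃ q : ℚ, s = q) ∨ (x ∉ kkEndpoints ∧ Irrational s)) := by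
  simp only [kkFan, mem_iUnion, segment_eq_image_kkLegPoint, mem_image, exists_prop]
  constructor
  · rintro ⟨x, hx, ⟨s, hs, rfl⟩, hcond⟩
    exact ⟨x, hx, s, hs, rfl, hcond⟩
  · rintro ⟨x, hx, s, hs, rfl, hcond⟩
    exact ⟨x, hx, ⟨s, hs, rfl⟩, hcond⟩

lemma kkLegPoint_mem_kkFan {x : ℝ} (hx : x ∈ kkEndpoints) {q : ℚ} (hq₀ : 0 ≤ (q : ℝ))
    (hq : (q : ℝ) ≤ 1 / 2) : kkLegPoint x q ∈ kkFan :=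
  mem_kkFan_iff.mpr ⟨x, hx.1, q, ⟨hq₀, hq⟩, rfl, Or.inl ⟨hx, q, rfl⟩⟩

lemma snd_nonneg_of_mem_kkFan {p : ℝ × ℝ} (hp : p ∈ kkFan) : 0 ≤ p.2 := by
  obtain ⟨x, -, s, hs, rfl, -⟩ := mem_kkFan_iff.mp hp
  exact hs.1

lemma kkLegFoot_mem_cantorSet {p : ℝ × ℝ} (hp : p ∈ kkFan) (h : p.2 ≠ 1 / 2) :
    kkLegFoot p ∈ cantorSet := by
  obtain ⟨x, hx, s, -, rfl, -⟩ := mem_kkFan_iff.mp hp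
  rw [kkLegPoint_snd] at h
  rwa [kkLegFoot_kkLegPoint h]

lemma exists_rat_snd_of_kkLegFoot_mem_kkEndpoints {p : ℝ × ℝ} (hp : p ∈ kkFan)
    (h : p.2 ≠ 1 / 2) (hfoot : kkLegFoot p ∈ kkEndpoints) : ∃ q : ℚ, p.2 = q := by
  obtain ⟨x, -, s, -, rfl, hcond⟩ := mem_kkFan_iff.mp hp
  rw [kkLegPoint_snd] at h ⊢
  rw [kkLegFoot_kkLegPoint h] at hfoot
  rcases hcond with ⟨-, hq⟩ | ⟨hx, -⟩
  · exact hq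
  · exact absurd hfoot hx

lemma snd_eq_zero_of_isPreconnected {S : Set (ℝ × ℝ)} (hS : IsPreconnected S)
    (hSF : S ⊆ kkFan) (hS_low : S ⊆ {p | p.2 < 1 / 2}) {x : ℝ} (hx : x ∈ kkEndpoints)
    (hxS : (x, 0) ∈ S) : ∀ p ∈ S, p.2 = 0 := by
  have hne : ∀ p ∈ S, p.2 ≠ 1 / 2 := fun p hp => (hS_low hp).ne
  have hfoot : ∀ p ∈ S, kkLegFoot p = x := by
    have hsub := isTotallyDisconnected_cantorSet _
      (by rintro _ ⟨p, hp, rfl⟩; exact kkLegFoot_mem_cantorSet (hSF hp) (hne p hp))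
      (hS.image _ (continuousOn_kkLegFoot.mono hS_low))
    intro p hp
    simpa [kkLegFoot] using hsub (mem_image_of_mem _ hp) (mem_image_of_mem _ hxS)
  intro p hp
  by_contra hp0
  have hpos : 0 < p.2 := (snd_nonneg_of_mem_kkFan (hSF hp)).lt_of_ne' hp0
  obtain ⟨r, hr, hr0, hrp⟩ := exists_irrational_btwn hpos
  obtain ⟨w, hw, rfl⟩ := (hS.image _ continuous_snd.continuousOn).Icc_subset
    (mem_image_of_mem _ hxS) (mem_image_of_mem _ hp) ⟨hr0.le, hrp.le⟩
  obtain ⟨q, hq⟩ := exists_rat_snd_of_kkLegFoot_mem_kkEndpoints (hSF hw) (hne w hw)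
    (hfoot w hw ▸ hx)
  exact hr ⟨q, hq.symm⟩

lemma mem_closure_kkFan_inter_snd_pos {x : ℝ} (hx : x ∈ kkEndpoints) :
    (x, 0) ∈ closure (kkFan ∩ {p | 0 < p.2}) := by
  have hlim : Tendsto (fun n : ℕ => 1 / ((n : ℝ) + 1) / 2) atTop (𝓝 0) := by
    simpa only [zero_div] using tendsto_one_div_add_atTop_nhds_zero_nat.div_const (2 : ℝ)
  refine mem_closure_of_tendsto (f := fun n : ℕ => kkLegPoint x (1 / ((n : ℝ) + 1) / 2))
    (((continuous_kkLegPoint x).tendsto' 0 (x, 0) (by simp [kkLegPoint])).comp hlim)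
    (Eventually.of_forall fun n => ⟨?_, ?_⟩)
  · have hle : 1 / ((n : ℝ) + 1) ≤ 1 :=
      div_le_one_of_le₀ (by linarith [n.cast_nonneg (α := ℝ)]) (by positivity)
    have hq := kkLegPoint_mem_kkFan hx (q := 1 / ((n : ℚ) + 1) / 2) (by push_cast; positivity)
      (by push_cast; linarith)
    simpa using hq
  · show 0 < (kkLegPoint x _).2
    rw [kkLegPoint_snd]
    positivity

/-- The Knaster–Kuratowski fan (with the subspace topology from `ℝ²`) is not
locally connected. -/
theorem stmt_7 : ¬ LocallyConnectedSpace ↥kkFan := by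
  intro h
  have hP : ((1 / 3 : ℝ), (0 : ℝ)) ∈ kkFan := by
    simpa [kkLegPoint] using kkLegPoint_mem_kkFan one_third_mem_kkEndpoints (q := 0) (by norm_num)
      (by norm_num)
  let P : kkFan := ⟨_, hP⟩
  have hU : {u : kkFan | (u : ℝ × ℝ).2 < 1 / 2} ∈ 𝓝 P :=
    (isOpen_lt (by fun_prop) continuous_const).mem_nhds (by norm_num [P])
  obtain ⟨V, hVU, hVopen, hPV, hVconn⟩ :=
    locallyConnectedSpace_iff_subsets_isOpen_isConnected.mp h P _ hU
  have hflat : ∀ p ∈ Subtype.val '' V, p.2 = 0 :=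
    snd_eq_zero_of_isPreconnected
      (hVconn.isPreconnected.image _ continuous_subtype_val.continuousOn)
      (by rintro _ ⟨u, -, rfl⟩; exact u.2) (by rintro _ ⟨u, hu, rfl⟩; exact hVU hu)
      one_third_mem_kkEndpoints ⟨P, hPV, rfl⟩
  obtain ⟨O, hO, hOV⟩ := (mem_nhds_subtype _ _ _).mp (hVopen.mem_nhds hPV)
  obtain ⟨p, hpO, hpF, hp_pos⟩ :=
    mem_closure_iff_nhds.mp (mem_closure_kkFan_inter_snd_pos one_third_mem_kkEndpoints) O hO
  exact hp_pos.ne' (hflat p ⟨⟨p, hpF⟩, hOV hpO, rfl⟩)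
end

section
/- For every Hausdorff space X and every natural number k, the collection X_{k+1} is contained in X_k, where X_n are the families of subsets arising in the definition of Abbott dimension. -/
open Set

namespace Abbott

variable {X : Type*} [TopologicalSpace X]

/-- `V` is an open subset of the subspace `Y`. -/
def OpenIn (Y V : Set X) : Prop := ∃ O : Set X, IsOpen O ∧ V = O ∩ Y

/-- The closure of `V` in the subspace `Y`. -/
def clIn (Y V : Set X) : Set X := closure V ∩ Y

/-- The boundary of `V` in the subspace `Y`. -/
def bdIn (Y V : Set X) : Set X := clIn Y V ∩ clIn Y (Y \ V)

/-- `𝒞(x, z, Y)`: the connected open subsets of the subspace `Y` containing both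
`x` and `z`. -/
def CC (x z : X) (Y : Set X) : Set (Set X) :=
  {V | OpenIn Y V ∧ IsConnected V ∧ x ∈ V ∧ z ∈ V}

/-- The families `X_n` of subsets of `X` from the definition of Abbott dimension:
`X_0` is the power set of `X`, and `Y ∈ X_{n+1}` iff there are `K ∈ X_n` with
`K ⊆ Y` and an observation point `z ∈ Y \ K` such that for every `x ∈ K` there is
a continuum (compact connected set) `W ⊆ Y` through `x` and `z` satisfying:
for every open neighbourhood `U` of `x` in `K` there is
`V ∈ 𝒞(x,z,Y)` containing `W` with `x ∈ V ∩ K ⊆ cl_Y(V) ∩ K ⊆ U`;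
`𝒞(x,z,Y)` contains a neighbourhood basis for `W` in `Y`; and for every
collection of such sets `V` there is an open neighbourhood `U` of `x` in `K` such
that each member `V` of the collection with `cl_Y(V) ∩ K ⊆ U` has a subset
`D ⊆ ∂_Y V` with `D ∈ X_n`. -/
def fam (X : Type*) [TopologicalSpace X] : ℕ → Set (Set X)
  | 0 => univ
  | (n + 1) => {Y | ∃ K ∈ fam X n, K ⊆ Y ∧ ∃ z ∈ Y \ K, ∀ x ∈ K,
      ∃ W : Set X, W ⊆ Y ∧ IsCompact W ∧ IsConnected W ∧ x ∈ W ∧ z ∈ W ∧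
        (∀ U : Set X, OpenIn K U → x ∈ U →
          ∃ V ∈ CC x z Y, W ⊆ V ∧ x ∈ V ∩ K ∧ clIn Y V ∩ K ⊆ U) ∧
        (∀ O : Set X, OpenIn Y O → W ⊆ O → ∃ V ∈ CC x z Y, W ⊆ V ∧ V ⊆ O) ∧
        (∀ 𝒱 : Set (Set X), (∀ V ∈ 𝒱, V ∈ CC x z Y ∧ W ⊆ V) →
          ∃ U : Set X, OpenIn K U ∧ x ∈ U ∧
            ∀ V ∈ 𝒱, clIn Y V ∩ K ⊆ U → ∃ D ⊆ bdIn Y V, D ∈ fam X n)}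

/-- The Abbott dimension of a (nonempty Hausdorff) space `X`: the greatest `n`
(as an element of `ℕ∞`) for which `X_n ≠ ∅`. -/
noncomputable def abbottDim (X : Type*) [TopologicalSpace X] : ℕ∞ :=
  sSup {e : ℕ∞ | ∃ n : ℕ, e = (n : ℕ∞) ∧ (fam X n).Nonempty}

/-- `X_n` occurs only positively in the definition of `X_{n+1}`. -/
theorem fam_succ_mono {m n : ℕ} (h : fam X m ⊆ fam X n) : fam X (m + 1) ⊆ fam X (n + 1) := by
  rintro Y ⟨K, hK, hKY, z, hz, hwitness⟩
  refine ⟨K, h hK, hKY, z, hz, fun x hx => ?_⟩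
  obtain ⟨W, hWY, hW_cpt, hW_conn, hxW, hzW, hV_small, hV_basis, hbd⟩ := hwitness x hx
  refine ⟨W, hWY, hW_cpt, hW_conn, hxW, hzW, hV_small, hV_basis, fun 𝒱 h𝒱 => ?_⟩
  obtain ⟨U, hU_open, hxU, hU⟩ := hbd 𝒱 h𝒱
  refine ⟨U, hU_open, hxU, fun V hV hVU => ?_⟩
  obtain ⟨D, hD_bd, hD⟩ := hU V hV hVU
  exact ⟨D, hD_bd, h hD⟩

end Abbott

theorem stmt_10_general (X : Type*) [TopologicalSpace X] (k : ℕ) :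
    Abbott.fam X (k + 1) ⊆ Abbott.fam X k := by
  induction k with
  | zero => exact subset_univ _
  | succ n ih => exact Abbott.fam_succ_mono ih

/-- For every Hausdorff space `X` and every `k`, `X_{k+1} ⊆ X_k`. -/
theorem stmt_10 (X : Type*) [TopologicalSpace X] [T2Space X] (k : ℕ) :
    Abbott.fam X (k + 1) ⊆ Abbott.fam X k :=
  stmt_10_general X k
end

section
/- If X is a Hausdorff space and Y ⊆ X is a subspace, then Ab(Y) ≤ Ab(X), where Ab denotes Abbott dimension. -/
open Set

/-! The inclusion `Y ↪ X` maps each member of `Y_n` to a member of `X_n`, by induction on `n`: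
images under an embedding preserve relative openness, relative closures and boundaries,
continua and connected open sets, while the families `𝒱` of clause (4) for the image
are handled by pulling them back to `Y`. -/

open Topology

namespace Abbott

variable {X Y : Type*} [TopologicalSpace X] [TopologicalSpace Y] {f : Y → X}

theorem OpenIn.subset {S V : Set X} (h : OpenIn S V) : V ⊆ S := by
  obtain ⟨O, -, rfl⟩ := h
  exact inter_subset_right

theorem OpenIn.preimage (hf : Continuous f) {S U : Set X} (h : OpenIn S U) :
    OpenIn (f ⁻¹' S) (f ⁻¹' U) := by
  obtain ⟨O, hO, rfl⟩ := h
  exact ⟨f ⁻¹' O, hO.preimage hf, preimage_inter⟩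

theorem OpenIn.image (hf : IsInducing f) {K U : Set Y} (h : OpenIn K U) :
    OpenIn (f '' K) (f '' U) := by
  obtain ⟨O, hO, rfl⟩ := h
  obtain ⟨O', hO', rfl⟩ := hf.isOpen_iff.mp hO
  exact ⟨O', hO', image_preimage_inter f K O'⟩

theorem _root_.Topology.IsInducing.image_clIn (hf : IsInducing f) (A V : Set Y) :
    f '' clIn A V = clIn (f '' A) (f '' V) := by
  rw [clIn, hf.closure_eq_preimage_closure_image, image_preimage_inter, clIn]

theorem _root_.Topology.IsEmbedding.image_bdIn (hf : IsEmbedding f) (A V : Set Y) :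
    f '' bdIn A V = bdIn (f '' A) (f '' V) := by
  rw [bdIn, image_inter hf.injective, hf.isInducing.image_clIn, hf.isInducing.image_clIn,
    image_sdiff hf.injective, bdIn]

theorem image_mem_CC (hf : IsInducing f) {x z : Y} {A V : Set Y} (h : V ∈ CC x z A) :
    f '' V ∈ CC (f x) (f z) (f '' A) :=
  ⟨h.1.image hf, h.2.1.image f hf.continuous.continuousOn, mem_image_of_mem f h.2.2.1,
    mem_image_of_mem f h.2.2.2⟩

theorem preimage_mem_CC (hf : IsInducing f) {x z : Y} {S V : Set X} (hS : S ⊆ range f)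
    (h : V ∈ CC (f x) (f z) S) : f ⁻¹' V ∈ CC x z (f ⁻¹' S) := by
  obtain ⟨hVo, hVc, hxV, hzV⟩ := h
  have hV : f '' (f ⁻¹' V) = V := image_preimage_eq_of_subset (hVo.subset.trans hS)
  refine ⟨hVo.preimage hf.continuous, ⟨⟨x, hxV⟩, ?_⟩, hxV, hzV⟩
  exact hf.isPreconnected_image.mp (by rw [hV]; exact hVc.2)

section Step

variable (hf : IsEmbedding f) {x z : Y} {A K W : Set Y}
include hf

theorem exists_mem_CC_image_clIn_inter_subset
    (h : ∀ U : Set Y, OpenIn K U → x ∈ U →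
      ∃ V ∈ CC x z A, W ⊆ V ∧ x ∈ V ∩ K ∧ clIn A V ∩ K ⊆ U)
    {U : Set X} (hU : OpenIn (f '' K) U) (hxU : f x ∈ U) :
    ∃ V ∈ CC (f x) (f z) (f '' A), f '' W ⊆ V ∧ f x ∈ V ∩ f '' K ∧
      clIn (f '' A) V ∩ f '' K ⊆ U := by
  have hU' := hU.preimage hf.continuous
  rw [hf.injective.preimage_image] at hU'
  obtain ⟨V, hV, hWV, hxV, hclV⟩ := h _ hU' hxU
  refine ⟨f '' V, image_mem_CC hf.isInducing hV, image_mono hWV,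
    ⟨mem_image_of_mem f hxV.1, mem_image_of_mem f hxV.2⟩, ?_⟩
  rw [← hf.isInducing.image_clIn, ← image_inter hf.injective]
  exact (image_mono hclV).trans (image_preimage_subset f U)

theorem exists_mem_CC_image_subset
    (h : ∀ O : Set Y, OpenIn A O → W ⊆ O → ∃ V ∈ CC x z A, W ⊆ V ∧ V ⊆ O)
    {O : Set X} (hO : OpenIn (f '' A) O) (hWO : f '' W ⊆ O) :
    ∃ V ∈ CC (f x) (f z) (f '' A), f '' W ⊆ V ∧ V ⊆ O := by
  have hO' := hO.preimage hf.continuous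
  rw [hf.injective.preimage_image] at hO'
  obtain ⟨V, hV, hWV, hVO⟩ := h _ hO' (image_subset_iff.mp hWO)
  exact ⟨f '' V, image_mem_CC hf.isInducing hV, image_mono hWV,
    image_subset_iff.mpr hVO⟩

theorem exists_openIn_image_bdIn {n : ℕ}
    (ih : ∀ D ∈ fam Y n, f '' D ∈ fam X n)
    (h : ∀ 𝒱 : Set (Set Y), (∀ V ∈ 𝒱, V ∈ CC x z A ∧ W ⊆ V) →
      ∃ U : Set Y, OpenIn K U ∧ x ∈ U ∧
        ∀ V ∈ 𝒱, clIn A V ∩ K ⊆ U → ∃ D ⊆ bdIn A V, D ∈ fam Y n)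
    (𝒱 : Set (Set X)) (h𝒱 : ∀ V ∈ 𝒱, V ∈ CC (f x) (f z) (f '' A) ∧ f '' W ⊆ V) :
    ∃ U : Set X, OpenIn (f '' K) U ∧ f x ∈ U ∧
      ∀ V ∈ 𝒱, clIn (f '' A) V ∩ f '' K ⊆ U → ∃ D ⊆ bdIn (f '' A) V, D ∈ fam X n := by
  have hpre : ∀ V ∈ 𝒱, f '' (f ⁻¹' V) = V := fun V hV ↦
    image_preimage_eq_of_subset ((h𝒱 V hV).1.1.subset.trans (image_subset_range f A))
  obtain ⟨U, hU, hxU, hD⟩ := h (preimage f '' 𝒱) <| by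
    rintro _ ⟨V, hV, rfl⟩
    have hCC := preimage_mem_CC hf.isInducing (image_subset_range f A) (h𝒱 V hV).1
    rw [hf.injective.preimage_image] at hCC
    exact ⟨hCC, image_subset_iff.mp (h𝒱 V hV).2⟩
  refine ⟨f '' U, hU.image hf.isInducing, mem_image_of_mem f hxU, fun V hV hVU ↦ ?_⟩
  obtain ⟨D, hDV, hD⟩ := hD _ (mem_image_of_mem _ hV) <| by
    rwa [← image_subset_image_iff hf.injective, image_inter hf.injective,
      hf.isInducing.image_clIn, hpre V hV]
  refine ⟨f '' D, ?_, ih D hD⟩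
  rw [← hpre V hV, ← hf.image_bdIn]
  exact image_mono hDV

end Step

theorem _root_.Topology.IsEmbedding.image_mem_fam (hf : IsEmbedding f) :
    ∀ {n : ℕ} {A : Set Y}, A ∈ fam Y n → f '' A ∈ fam X n
  | 0, _, _ => trivial
  | n + 1, A, ⟨K, hK, hKA, z, ⟨hzA, hzK⟩, hA⟩ => by
    refine ⟨f '' K, hf.image_mem_fam hK, image_mono hKA, f z,
      ⟨mem_image_of_mem f hzA, hf.injective.mem_set_image.not.mpr hzK⟩, ?_⟩
    rintro _ ⟨x, hxK, rfl⟩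
    obtain ⟨W, hWA, hWc, hWconn, hxW, hzW, h₁, h₂, h₃⟩ := hA x hxK
    exact ⟨f '' W, image_mono hWA, hWc.image hf.continuous,
      hWconn.image f hf.continuous.continuousOn, mem_image_of_mem f hxW,
      mem_image_of_mem f hzW, fun _ ↦ exists_mem_CC_image_clIn_inter_subset hf h₁,
      fun _ ↦ exists_mem_CC_image_subset hf h₂,
      exists_openIn_image_bdIn hf (fun _ ↦ hf.image_mem_fam) h₃⟩

theorem abbottDim_le_of_nonempty_fam
    (h : ∀ n : ℕ, (fam Y n).Nonempty → (fam X n).Nonempty) : abbottDim Y ≤ abbottDim X := by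
  apply sSup_le_sSup
  rintro e ⟨n, rfl, hn⟩
  exact ⟨n, rfl, h n hn⟩

theorem _root_.Topology.IsEmbedding.abbottDim_le (hf : IsEmbedding f) :
    abbottDim Y ≤ abbottDim X :=
  abbottDim_le_of_nonempty_fam fun _ ⟨A, hA⟩ ↦ ⟨f '' A, hf.image_mem_fam hA⟩

end Abbott

theorem stmt_11_general (X : Type*) [TopologicalSpace X] (Y : Set X) :
    Abbott.abbottDim ↥Y ≤ Abbott.abbottDim X :=
  IsEmbedding.subtypeVal.abbottDim_le

/-- If `X` is a Hausdorff space and `Y ⊆ X` is a subspace, then `Ab(Y) ≤ Ab(X)`. -/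
theorem stmt_11 (X : Type*) [TopologicalSpace X] [T2Space X] (Y : Set X) :
    Abbott.abbottDim ↥Y ≤ Abbott.abbottDim X :=
  stmt_11_general X Y
end
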